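/- Let F be a finite field, G = GL₂(F[t]), B the subgroup of G consisting of upper-triangular elements (those X with lower-left matrix entry 0), and U the subgroup of upper-unipotent elements {u(a) : a ∈ F[t]}. Then for every group automorphism σ of G there exists g ∈ G such that σ(B) = gBg⁻¹ and σ(U) = gUg⁻¹. -/

import Mathlib

/-- The unipotent element `u(a) = [[1,a],[0,1]]` of `GL₂(R)`. -/
noncomputable def unip {R : Type*} [CommRing R] (a : R) :
    Matrix.GeneralLinearGroup (Fin 2) R :=
  ⟨!![1, a; 0, 1], !![1, -a; 0, 1],
    by simp [Matrix.mul_fin_two, Matrix.one_fin_two],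
    by simp [Matrix.mul_fin_two, Matrix.one_fin_two]⟩

/-- The subgroup `B` of upper-triangular elements of `GL₂(F[t])`. -/
noncomputable def upperTriangular (F : Type*) [Field F] :
    Subgroup (Matrix.GeneralLinearGroup (Fin 2) (Polynomial F)) where
  carrier := {X | (X : Matrix (Fin 2) (Fin 2) (Polynomial F)) 1 0 = 0}
  one_mem' := by
    simp [Matrix.one_apply]
  mul_mem' := by
    intro X Y hX hY
    simp only [Set.mem_setOf_eq] at *
    rw [Matrix.GeneralLinearGroup.coe_mul, Matrix.mul_apply]
    simp [Fin.sum_univ_succ, hX, hY]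
  inv_mem' := by
    intro X hX
    simp only [Set.mem_setOf_eq] at *
    rw [Matrix.GeneralLinearGroup.coe_inv, Matrix.inv_def, Matrix.adjugate_fin_two]
    simp [hX]

/-- The subgroup `U = {u(a) : a ∈ F[t]}` of upper-unipotent elements of `GL₂(F[t])`. -/
noncomputable def upperUnipotent (F : Type*) [Field F] :
    Subgroup (Matrix.GeneralLinearGroup (Fin 2) (Polynomial F)) where
  carrier := {X | ∃ a : Polynomial F, X = unip a}
  one_mem' := ⟨0, Units.ext (by simp [unip, Matrix.one_fin_two])⟩
  mul_mem' := by
    rintro X Y ⟨a, rfl⟩ ⟨b, rfl⟩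
    exact ⟨a + b, Units.ext (by simp [unip, Matrix.mul_fin_two, add_comm])⟩
  inv_mem' := by
    rintro X ⟨a, rfl⟩
    exact ⟨-a, Units.ext rfl⟩

/-!
If `char F = p`, an element `x` of `GL₂(F[t])` with `x ^ p = 1` has `det (x - 1) = 0`, so it fixes
a nonzero vector of `F[t]²`; dividing out the gcd of its entries gives a primitive fixed vector,
which is the first column of some `P ∈ GL₂(F[t])`, and then `P⁻¹ x P = u(a)`. Applied to
`x = σ (u 1)` this lets us replace `σ` by `τ = P⁻¹ σ(·) P` with `τ (u 1) = u a`, `a ≠ 0`.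
For every `a ≠ 0`, `U` is the set of `p`-torsion elements commuting with `u(a)`, a description
that `τ` transports from `u(1)` to `u(a)`; hence `τ(U) = U`, and `τ(B) = B` since `B` is the
normalizer of `U`.
-/

open Matrix Polynomial

section ReducedCharP

variable {R : Type*} [CommRing R] [IsReduced R] (p : ℕ) [Fact p.Prime] [CharP R p]

theorem eq_one_of_pow_char_eq_one {a : R} (h : a ^ p = 1) : a = 1 :=
  frobenius_inj R p (by rw [frobenius_def, frobenius_def, h, one_pow])

theorem Matrix.det_sub_one_eq_zero_of_pow_char_eq_one {n : Type*} [Fintype n] [DecidableEq n]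
    [Nonempty n] {M : Matrix n n R} (h : M ^ p = 1) : (M - 1).det = 0 := by
  have hnil : (M - 1) ^ p = 0 := by
    rw [sub_pow_char_of_commute p (Commute.one_right M), h, one_pow, sub_self]
  exact IsReduced.eq_zero _ ⟨p, by rw [← det_pow, hnil, det_zero]⟩

end ReducedCharP

theorem exists_isCoprime_smul_eq {R : Type*} [EuclideanDomain R] [GCDMonoid R]
    {v : Fin 2 → R} (hv : v ≠ 0) :
    ∃ (c : R) (w : Fin 2 → R), IsCoprime (w 0) (w 1) ∧ v = c • w := by
  have hgcd : gcd (v 0) (v 1) ≠ 0 := by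
    rw [Ne, gcd_eq_zero_iff]
    rintro ⟨h0, h1⟩
    exact hv (funext fun i => by fin_cases i <;> assumption)
  refine ⟨gcd (v 0) (v 1), ![v 0 / gcd (v 0) (v 1), v 1 / gcd (v 0) (v 1)],
    isCoprime_div_gcd_div_gcd_of_gcd_ne_zero hgcd, funext fun i => ?_⟩
  fin_cases i
  · exact (EuclideanDomain.mul_div_cancel' hgcd (gcd_dvd_left _ _)).symm
  · exact (EuclideanDomain.mul_div_cancel' hgcd (gcd_dvd_right _ _)).symm

theorem Matrix.exists_isCoprime_mulVec_eq_self {R : Type*} [EuclideanDomain R] [GCDMonoid R]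
    {M : Matrix (Fin 2) (Fin 2) R} (hM : (M - 1).det = 0) :
    ∃ w : Fin 2 → R, IsCoprime (w 0) (w 1) ∧ M *ᵥ w = w := by
  obtain ⟨v, hv, hMv⟩ := exists_mulVec_eq_zero_iff.mpr hM
  obtain ⟨c, w, hw, rfl⟩ := exists_isCoprime_smul_eq hv
  have hc : c ≠ 0 := by rintro rfl; exact hv (zero_smul _ _)
  refine ⟨w, hw, ?_⟩
  rw [sub_mulVec, one_mulVec, mulVec_smul, ← smul_sub, smul_eq_zero] at hMv
  exact sub_eq_zero.mp (hMv.resolve_left hc)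

theorem Matrix.GeneralLinearGroup.exists_mulVec_single_zero_eq {R : Type*} [CommRing R]
    {w : Fin 2 → R} (hw : IsCoprime (w 0) (w 1)) :
    ∃ P : GL (Fin 2) R, (P : Matrix (Fin 2) (Fin 2) R) *ᵥ Pi.single 0 1 = w := by
  obtain ⟨P, h0, h1⟩ := hw.exists_SL2_col 0
  refine ⟨SpecialLinearGroup.toGL P, funext fun i => ?_⟩
  rw [mulVec_single_one]
  fin_cases i <;> simpa

theorem Matrix.GeneralLinearGroup.inv_mul_mul_mulVec_eq_self {n R : Type*} [Fintype n]
    [DecidableEq n] [CommRing R] {P X : GL n R} {e : n → R}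
    (hX : (X : Matrix n n R) *ᵥ ((P : Matrix n n R) *ᵥ e) = (P : Matrix n n R) *ᵥ e) :
    ((P⁻¹ * X * P : GL n R) : Matrix n n R) *ᵥ e = e := by
  rw [Units.val_mul, Units.val_mul, ← mulVec_mulVec, ← mulVec_mulVec, hX, mulVec_mulVec,
    ← Units.val_mul, inv_mul_cancel, Units.val_one, one_mulVec]

section Unip

variable {R : Type*} [CommRing R]

theorem unip_mul_unip (a b : R) : unip a * unip b = unip (a + b) :=
  Units.ext (by simp [unip, add_comm])

theorem unip_zero : unip (0 : R) = 1 :=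
  Units.ext (by simp [unip, one_fin_two])

theorem unip_pow (a : R) (n : ℕ) : unip a ^ n = unip (n • a) := by
  induction n with
  | zero => rw [pow_zero, zero_smul, unip_zero]
  | succ n ih => rw [pow_succ, ih, unip_mul_unip, succ_nsmul]

theorem unip_pow_char (p : ℕ) [CharP R p] (a : R) : unip a ^ p = 1 := by
  rw [unip_pow, nsmul_eq_mul, CharP.cast_eq_zero, zero_mul, unip_zero]

theorem unip_injective : Function.Injective (unip : R → GL (Fin 2) R) := fun a b h => by
  simpa [unip] using congrArg (fun g : GL (Fin 2) R => (g : Matrix (Fin 2) (Fin 2) R) 0 1) h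

end Unip

section UnipotentAndBorel

variable {F : Type*} [Field F]

theorem mem_upperTriangular_iff {X : GL (Fin 2) F[X]} :
    X ∈ upperTriangular F ↔ (X : Matrix (Fin 2) (Fin 2) F[X]) 1 0 = 0 := Iff.rfl

theorem mem_upperUnipotent_iff_det {X : GL (Fin 2) F[X]} :
    X ∈ upperUnipotent F ↔
      X ∈ upperTriangular F ∧ (X : Matrix (Fin 2) (Fin 2) F[X]).det = 1 ∧
        ((X : Matrix (Fin 2) (Fin 2) F[X]) - 1).det = 0 := by
  constructor
  · rintro ⟨a, rfl⟩
    simp [mem_upperTriangular_iff, unip, det_fin_two]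
  · rintro ⟨hB, hdet, hdet₁⟩
    rw [mem_upperTriangular_iff] at hB
    rw [det_fin_two, hB, mul_zero, sub_zero] at hdet
    rw [det_fin_two] at hdet₁
    simp only [Matrix.sub_apply, one_apply_eq, one_apply_ne one_ne_zero, hB, sub_zero,
      sub_self, mul_zero] at hdet₁
    have h₀₀ : (X : Matrix (Fin 2) (Fin 2) F[X]) 0 0 = 1 := by
      rcases mul_eq_zero.mp hdet₁ with h | h
      · exact sub_eq_zero.mp h
      · rw [sub_eq_zero.mp h, mul_one] at hdet; exact hdet
    rw [h₀₀, one_mul] at hdet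
    refine ⟨(X : Matrix (Fin 2) (Fin 2) F[X]) 0 1, Units.ext ?_⟩
    ext i j
    fin_cases i <;> fin_cases j <;> simp [unip, h₀₀, hB, hdet]

theorem mem_upperTriangular_of_mul_unip_eq {X : GL (Fin 2) F[X]} {a c : F[X]} (ha : a ≠ 0)
    (h : X * unip a = unip c * X) : X ∈ upperTriangular F := by
  have h₁₁ := congrArg (fun g : GL (Fin 2) F[X] => (g : Matrix (Fin 2) (Fin 2) F[X]) 1 1) h
  simp only [Units.val_mul, unip, mul_apply, Fin.sum_univ_two] at h₁₁
  simp only [of_apply, cons_val', cons_val_zero, cons_val_one, empty_val', cons_val_fin_one,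
    mul_one, zero_mul, one_mul] at h₁₁
  exact (mul_eq_zero.mp (add_right_cancel h₁₁)).resolve_right ha

theorem conj_mem_upperUnipotent {X Y : GL (Fin 2) F[X]} (hX : X ∈ upperTriangular F)
    (hY : Y ∈ upperUnipotent F) : X * Y * X⁻¹ ∈ upperUnipotent F := by
  obtain ⟨hYB, hdet, hdet₁⟩ := mem_upperUnipotent_iff_det.mp hY
  have hconj : ((X * Y * X⁻¹ : GL (Fin 2) F[X]) : Matrix (Fin 2) (Fin 2) F[X]) - 1 =
      (X : Matrix (Fin 2) (Fin 2) F[X]) * ((Y : Matrix (Fin 2) (Fin 2) F[X]) - 1) *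
        ((X⁻¹ : GL (Fin 2) F[X]) : Matrix (Fin 2) (Fin 2) F[X]) := by
    rw [Units.val_mul, Units.val_mul, mul_sub, sub_mul, mul_one, Units.mul_inv]
  refine mem_upperUnipotent_iff_det.mpr ⟨mul_mem (mul_mem hX hYB) (inv_mem hX), ?_, ?_⟩
  · rw [Units.val_mul, Units.val_mul, det_units_conj, hdet]
  · rw [hconj, det_units_conj, hdet₁]

theorem normalizer_upperUnipotent :
    Subgroup.normalizer (upperUnipotent F : Set (GL (Fin 2) F[X])) = upperTriangular F := by
  refine le_antisymm (fun X hX => ?_) (fun X hX => ?_)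
  · obtain ⟨c, hc⟩ := (Subgroup.mem_normalizer_iff.mp hX (unip 1)).mp ⟨1, rfl⟩
    exact mem_upperTriangular_of_mul_unip_eq one_ne_zero (by rw [← hc]; group)
  · refine Subgroup.mem_normalizer_iff.mpr fun Y => ⟨conj_mem_upperUnipotent hX, fun hY => ?_⟩
    simpa [mul_assoc] using conj_mem_upperUnipotent (inv_mem hX) hY

section CharP

variable (p : ℕ) [Fact p.Prime] [CharP F p]

theorem mem_upperUnipotent_of_pow_char_eq_one {X : GL (Fin 2) F[X]}
    (hX : X ∈ upperTriangular F) (hp : X ^ p = 1) : X ∈ upperUnipotent F := by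
  have hXp : (X : Matrix (Fin 2) (Fin 2) F[X]) ^ p = 1 := by
    rw [← Units.val_pow_eq_pow_val, hp, Units.val_one]
  refine mem_upperUnipotent_iff_det.mpr ⟨hX, eq_one_of_pow_char_eq_one p ?_,
    det_sub_one_eq_zero_of_pow_char_eq_one p hXp⟩
  rw [← det_pow, hXp, det_one]

theorem mem_upperUnipotent_iff_commute_unip {X : GL (Fin 2) F[X]} {a : F[X]} (ha : a ≠ 0) :
    X ∈ upperUnipotent F ↔ Commute X (unip a) ∧ X ^ p = 1 := by
  constructor
  · rintro ⟨b, rfl⟩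
    exact ⟨by rw [Commute, SemiconjBy, unip_mul_unip, unip_mul_unip, add_comm],
      unip_pow_char p b⟩
  · rintro ⟨hcomm, hp⟩
    exact mem_upperUnipotent_of_pow_char_eq_one p
      (mem_upperTriangular_of_mul_unip_eq ha hcomm.eq) hp

theorem exists_inv_mul_mul_eq_unip {x : GL (Fin 2) F[X]} (hx : x ^ p = 1) :
    ∃ (P : GL (Fin 2) F[X]) (a : F[X]), P⁻¹ * x * P = unip a := by
  classical
  have hxp : (x : Matrix (Fin 2) (Fin 2) F[X]) ^ p = 1 := by
    rw [← Units.val_pow_eq_pow_val, hx, Units.val_one]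
  obtain ⟨w, hw, hxw⟩ :=
    exists_isCoprime_mulVec_eq_self (det_sub_one_eq_zero_of_pow_char_eq_one p hxp)
  obtain ⟨P, hPw⟩ := GeneralLinearGroup.exists_mulVec_single_zero_eq hw
  have hcol : ((P⁻¹ * x * P : GL (Fin 2) F[X]) : Matrix (Fin 2) (Fin 2) F[X]) *ᵥ
      Pi.single 0 1 = Pi.single 0 1 :=
    GeneralLinearGroup.inv_mul_mul_mulVec_eq_self (by rw [hPw]; exact hxw)
  have hB : P⁻¹ * x * P ∈ upperTriangular F := by
    have h₁₀ := congrFun hcol 1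
    rwa [mulVec_single_one, Pi.single_eq_of_ne one_ne_zero] at h₁₀
  have hp : (P⁻¹ * x * P) ^ p = 1 := by
    simpa [hx] using conj_pow (a := P⁻¹) (b := x) (i := p)
  obtain ⟨a, ha⟩ := mem_upperUnipotent_of_pow_char_eq_one p hB hp
  exact ⟨P, a, ha⟩

end CharP

theorem map_upperUnipotent_eq_self (p : ℕ) [Fact p.Prime] [CharP F p]
    {τ : MulAut (GL (Fin 2) F[X])} {a : F[X]} (ha : a ≠ 0)
    (hτ : τ (unip 1) = unip a) : (upperUnipotent F).map τ.toMonoidHom = upperUnipotent F := by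
  ext y
  obtain ⟨X, rfl⟩ := τ.surjective y
  rw [Subgroup.mem_map_equiv, τ.symm_apply_apply,
    mem_upperUnipotent_iff_commute_unip p one_ne_zero, mem_upperUnipotent_iff_commute_unip p ha,
    ← hτ, commute_map_iff τ.injective, ← map_pow, MulEquiv.map_eq_one_iff]

theorem map_upperTriangular_eq_self (p : ℕ) [Fact p.Prime] [CharP F p]
    {τ : MulAut (GL (Fin 2) F[X])} {a : F[X]} (ha : a ≠ 0)
    (hτ : τ (unip 1) = unip a) : (upperTriangular F).map τ.toMonoidHom = upperTriangular F := by
  rw [← normalizer_upperUnipotent, Subgroup.map_equiv_normalizer_eq,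
    map_upperUnipotent_eq_self p ha hτ]

end UnipotentAndBorel

/-- Every automorphism of `GL₂(F[t])` sends the subgroup `B` of upper-triangular matrices
(resp. the subgroup `U` of upper-unipotent matrices) to a conjugate `gBg⁻¹`
(resp. `gUg⁻¹`), for one and the same `g`. -/
theorem aut_maps_borel_and_unipotent_to_conjugate (F : Type) [Field F] [Fintype F]
    (σ : MulAut (Matrix.GeneralLinearGroup (Fin 2) (Polynomial F))) :
    ∃ g : Matrix.GeneralLinearGroup (Fin 2) (Polynomial F),
      Subgroup.map σ.toMonoidHom (upperTriangular F) =
        Subgroup.map (MulAut.conj g).toMonoidHom (upperTriangular F) ∧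
      Subgroup.map σ.toMonoidHom (upperUnipotent F) =
        Subgroup.map (MulAut.conj g).toMonoidHom (upperUnipotent F) := by
  obtain ⟨p, _⟩ := CharP.exists F
  have : Fact p.Prime := ⟨CharP.char_is_prime F p⟩
  obtain ⟨P, a, hP⟩ := exists_inv_mul_mul_eq_unip p
    (x := σ (unip 1)) (by rw [← map_pow, unip_pow_char, map_one])
  have ha : a ≠ 0 := by
    rintro rfl
    rw [unip_zero, mul_assoc, inv_mul_eq_one, right_eq_mul, ← map_one σ,
      ← unip_zero (R := F[X])] at hP
    exact one_ne_zero (unip_injective (σ.injective hP))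
  set τ := σ.trans (MulAut.conj P⁻¹) with hτ
  have hτu : τ (unip 1) = unip a := by simpa [hτ] using hP
  have hσ : σ.toMonoidHom = (MulAut.conj P).toMonoidHom.comp τ.toMonoidHom := by
    ext X : 1
    simp [hτ, mul_assoc]
  refine ⟨P, ?_, ?_⟩ <;> rw [hσ, ← Subgroup.map_map]
  · rw [map_upperTriangular_eq_self p ha hτu]
  · rw [map_upperUnipotent_eq_self p ha hτu]
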